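/- Comparison Theorem: If (φ, xᵢ, qᵢ, yᵢ) and (φ', x'ⱼ, q'ⱼ, y'ⱼ) are two P-Frobenius systems for a P-Frobenius algebra A, then there exists an invertible element d ∈ A with φ' = φd, Σⱼ x'ⱼ ⊗ q'ⱼ ⊗ y'ⱼ = Σᵢ xᵢ ⊗ qᵢ ⊗ d⁻¹yᵢ, and the Nakayama automorphisms satisfy ν'(a) = d⁻¹ ν(a) d for all a ∈ A. -/
import Mathlib


open scoped TensorProduct

def IsInvertibleModule (k P : Type*) [CommRing k] [AddCommGroup P] [Module k P] : Prop :=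
  Module.Finite k P ∧ Module.Projective k P ∧ Function.Bijective (contractRight k P)

theorem exists_dual_basis (k M : Type*) [CommRing k] [AddCommGroup M] [Module k M]
    [Module.Finite k M] [Module.Projective k M] :
    ∃ (m : ℕ) (v : Fin m → M) (l : Fin m → Module.Dual k M),
      ∀ z : M, ∑ r, l r z • v r = z := by
  obtain ⟨m, f, g, hsurj, hinj, hfg⟩ := Module.Finite.exists_comp_eq_id_of_projective k M
  refine ⟨m, fun r => f (Pi.single r 1), fun r => (LinearMap.proj r) ∘ₗ g, fun z => ?_⟩
  have h1 : ∑ r, g z r • (Pi.single r (1:k) : Fin m → k) = g z := by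
    funext j
    simp [Finset.sum_apply, Pi.single_apply]
  have h2 : ∑ r, g z r • f ((Pi.single r (1:k) : Fin m → k)) =
      f (∑ r, g z r • (Pi.single r (1:k) : Fin m → k)) := by
    rw [map_sum]
    simp [map_smul]
  calc ∑ r, ((LinearMap.proj r ∘ₗ g) z) • f (Pi.single r 1)
      = f (g z) := by
        simp only [LinearMap.comp_apply, LinearMap.proj_apply]
        rw [h2, h1]
    _ = z := by
        have := LinearMap.congr_fun hfg z
        simpa using this

/-- Comparison Theorem: two `P`-Frobenius systems `(φ, xᵢ, qᵢ, yᵢ, ν)` and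
`(φ', x'ⱼ, q'ⱼ, y'ⱼ, ν')` for a `P`-Frobenius algebra `A` differ by an invertible
`d ∈ A`: `φ' = φd`, the dual bases tensors satisfy
`Σⱼ x'ⱼ ⊗ q'ⱼ ⊗ y'ⱼ = Σᵢ xᵢ ⊗ qᵢ ⊗ d⁻¹yᵢ`, and `ν'(a) = d⁻¹ ν(a) d`. -/
theorem comparison_theorem (k A P : Type*) [CommRing k] [AddCommGroup P] [Module k P]
    [Ring A] [Algebra k A] (hP : IsInvertibleModule k P)
    (hfin : Module.Finite k A) (hproj : Module.Projective k A)
    (φ φ' : A →ₗ[k] P)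
    (hφ : Function.Bijective fun a : A => φ ∘ₗ LinearMap.mulLeft k a)
    (hφ' : Function.Bijective fun a : A => φ' ∘ₗ LinearMap.mulLeft k a)
    (n n' : ℕ) (x y : Fin n → A) (q : Fin n → Module.Dual k P)
    (x' y' : Fin n' → A) (q' : Fin n' → Module.Dual k P)
    (hdb : ∀ a : A, ∑ i, q i (φ (a * x i)) • y i = a)
    (hdb' : ∀ a : A, ∑ j, q' j (φ' (a * x' j)) • y' j = a)
    (ν ν' : A → A)
    (hν : ∀ z a : A, φ (z * a) = φ (ν a * z))
    (hν' : ∀ z a : A, φ' (z * a) = φ' (ν' a * z)) :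
    ∃ d : Aˣ, (∀ z : A, φ' z = φ (↑d * z)) ∧
      (∑ j, x' j ⊗ₜ[k] (q' j ⊗ₜ[k] y' j)
        = ∑ i, x i ⊗ₜ[k] (q i ⊗ₜ[k] ((↑d⁻¹ : A) * y i))) ∧
      (∀ a : A, ν' a = ↑d⁻¹ * ν a * ↑d) := by
  obtain ⟨hPfin, hPproj, hPc⟩ := hP
  obtain ⟨d0, hd0⟩ := hφ.surjective φ'
  obtain ⟨e0, he0⟩ := hφ'.surjective φ
  have hφ'd : ∀ z : A, φ' z = φ (d0 * z) := fun z => by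
    rw [← hd0]; rfl
  have hφe : ∀ z : A, φ z = φ' (e0 * z) := fun z => by
    rw [← he0]; rfl
  have hde : d0 * e0 = 1 := by
    apply hφ.injective
    ext z
    simp only [LinearMap.comp_apply, LinearMap.mulLeft_apply]
    rw [mul_assoc, ← hφ'd, ← hφe, one_mul]
  have hed : e0 * d0 = 1 := by
    apply hφ'.injective
    ext z
    simp only [LinearMap.comp_apply, LinearMap.mulLeft_apply]
    rw [mul_assoc, ← hφe, ← hφ'd, one_mul]
  refine ⟨⟨d0, e0, hde, hed⟩, hφ'd, ?_, ?_⟩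
  · -- tensor equality
    show ∑ j, x' j ⊗ₜ[k] (q' j ⊗ₜ[k] y' j) = ∑ i, x i ⊗ₜ[k] (q i ⊗ₜ[k] (e0 * y i))
    -- modified dual basis for φ'
    have hdb'' : ∀ a : A, ∑ i, q i (φ' (a * x i)) • (e0 * y i) = a := by
      intro a
      have : ∀ i, q i (φ' (a * x i)) • (e0 * y i) = e0 * (q i (φ ((d0 * a) * x i)) • y i) := by
        intro i
        rw [hφ'd, mul_smul_comm, mul_assoc]
      rw [Finset.sum_congr rfl fun i _ => this i, ← Finset.mul_sum, hdb, ← mul_assoc, hed, one_mul]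
    have hstar : ∀ f : A →ₗ[k] P,
        ∑ j, q' j (f (x' j)) • y' j = ∑ i, q i (f (x i)) • (e0 * y i) := by
      intro f
      obtain ⟨b, hb⟩ := hφ'.surjective f
      have hfz : ∀ z : A, f z = φ' (b * z) := fun z => by rw [← hb]; rfl
      calc ∑ j, q' j (f (x' j)) • y' j = ∑ j, q' j (φ' (b * x' j)) • y' j := by
            simp_rw [hfz]
        _ = b := hdb' b
        _ = ∑ i, q i (φ' (b * x i)) • (e0 * y i) := (hdb'' b).symm
        _ = ∑ i, q i (f (x i)) • (e0 * y i) := by simp_rw [hfz]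
    -- dual bases of A and P
    obtain ⟨m, a, α, hA⟩ := exists_dual_basis k A
    obtain ⟨m', p, g, hPdb⟩ := exists_dual_basis k P
    have hQ : ∀ (Q : Module.Dual k P), ∑ s, Q (p s) • g s = Q := by
      intro Q
      ext z
      simp only [LinearMap.sum_apply, LinearMap.smul_apply, smul_eq_mul]
      calc ∑ s, Q (p s) * g s z = Q (∑ s, g s z • p s) := by
            rw [map_sum]; simp [map_smul, mul_comm]
        _ = Q z := by rw [hPdb]
    have expand : ∀ (N : ℕ) (X Y : Fin N → A) (Q : Fin N → Module.Dual k P),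
        ∑ u, X u ⊗ₜ[k] (Q u ⊗ₜ[k] Y u)
          = ∑ r, ∑ s, a r ⊗ₜ[k] (g s ⊗ₜ[k]
              (∑ u, Q u (((α r).smulRight (p s)) (X u)) • Y u)) := by
      intro N X Y Q
      have key : ∀ u, X u ⊗ₜ[k] (Q u ⊗ₜ[k] Y u)
          = ∑ r, ∑ s, (Q u ((α r) (X u) • p s)) • (a r ⊗ₜ[k] (g s ⊗ₜ[k] Y u)) := by
        intro u
        conv_lhs => rw [← hA (X u), ← hQ (Q u)]
        simp only [TensorProduct.sum_tmul, TensorProduct.tmul_sum, ← TensorProduct.smul_tmul',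
          TensorProduct.smul_tmul, Finset.smul_sum, TensorProduct.tmul_smul, map_smul,
          smul_eq_mul, smul_smul]
        rw [Finset.sum_comm]
        exact Finset.sum_congr rfl fun r _ => Finset.sum_congr rfl fun s _ => by
          rw [mul_comm]
      rw [Finset.sum_congr rfl fun u _ => key u, Finset.sum_comm]
      refine Finset.sum_congr rfl fun r _ => ?_
      rw [Finset.sum_comm]
      refine Finset.sum_congr rfl fun s _ => ?_
      rw [TensorProduct.tmul_sum, TensorProduct.tmul_sum]
      refine Finset.sum_congr rfl fun u _ => ?_
      rw [TensorProduct.tmul_smul, TensorProduct.tmul_smul]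
      simp [LinearMap.smulRight_apply]
    rw [expand n' x' y' q', expand n x (fun i => e0 * y i) q]
    refine Finset.sum_congr rfl fun r _ => Finset.sum_congr rfl fun s _ => ?_
    rw [hstar ((α r).smulRight (p s))]
  · -- Nakayama
    intro b
    show ν' b = e0 * ν b * d0
    apply hφ'.injective
    ext z
    simp only [LinearMap.comp_apply, LinearMap.mulLeft_apply]
    calc φ' (ν' b * z) = φ' (z * b) := (hν' z b).symm
      _ = φ (d0 * (z * b)) := hφ'd _
      _ = φ ((d0 * z) * b) := by rw [mul_assoc]
      _ = φ (ν b * (d0 * z)) := hν (d0 * z) b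
      _ = φ' (e0 * (ν b * (d0 * z))) := hφe _
      _ = φ' (e0 * ν b * d0 * z) := by rw [← mul_assoc, ← mul_assoc]
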